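/- For any two pure states Φᵢ = |φᵢ⟩⟨φᵢ|, Φⱼ = |φⱼ⟩⟨φⱼ| and real numbers qᵢ, qⱼ ∈ [0,1], the inequality (‖qᵢΦᵢ − (1−qⱼ)Φⱼ‖_tr + ‖(1−qᵢ)Φᵢ − qⱼΦⱼ‖_tr)² ≥ ‖Φᵢ − Φⱼ‖_tr² + (qᵢ + qⱼ − 1)² tr(ΦᵢΦⱼ) holds. -/

import Mathlib

open Matrix Kronecker BigOperators
open scoped ComplexOrder

/-- Trace distance/norm with factor 1/2: `‖A‖ = ½ tr √(AᴴA)`. -/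
noncomputable def trNorm {m : Type*} [Fintype m] [DecidableEq m] (A : Matrix m m ℂ) : ℝ :=
  (1 / 2) * (((Matrix.posSemidef_conjTranspose_mul_self A).isHermitian.eigenvectorUnitary.1 *
    diagonal (((↑) : ℝ → ℂ) ∘ (√·) ∘ (Matrix.posSemidef_conjTranspose_mul_self A).isHermitian.eigenvalues) *
    (star (Matrix.posSemidef_conjTranspose_mul_self A).isHermitian.eigenvectorUnitary : Matrix m m ℂ)).trace).re

/-- A density operator: positive semidefinite with unit trace. -/
def IsDensity {m : Type*} [Fintype m] (ρ : Matrix m m ℂ) : Prop :=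
  ρ.PosSemidef ∧ ρ.trace = 1

/-- A pure state: a density operator that is a (rank-one) projector. -/
def IsPureState {m : Type*} [Fintype m] (ρ : Matrix m m ℂ) : Prop :=
  IsDensity ρ ∧ ρ * ρ = ρ

/-- Completely positive trace-preserving map, via a Kraus representation. -/
def IsCPTP {m p : Type*} [Fintype m] [DecidableEq m] [Fintype p]
    (Λ : Matrix m m ℂ →ₗ[ℂ] Matrix p p ℂ) : Prop :=
  ∃ (ι : Type) (s : Finset ι) (K : ι → Matrix p m ℂ),
    (∀ ρ, Λ ρ = ∑ i ∈ s, K i * ρ * (K i)ᴴ) ∧ ∑ i ∈ s, (K i)ᴴ * K i = 1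

/-- Partial trace over the second (auxiliary) tensor factor. -/
noncomputable def ptraceB {m b : Type*} [Fintype b] (ρ : Matrix (m × b) (m × b) ℂ) :
    Matrix m m ℂ :=
  Matrix.of fun i j => ∑ k : b, ρ (i, k) (j, k)

/-- The projector `|χ⟩⟨χ|` onto the vector `χ`. -/
noncomputable def pureProj {m : Type*} (χ : m → ℂ) : Matrix m m ℂ :=
  Matrix.vecMulVec χ (star χ)

/-- `χ` lies in the range of `ρ`. -/
def inRange {m : Type*} [Fintype m] (ρ : Matrix m m ℂ) (χ : m → ℂ) : Prop :=
  ∃ v, ρ *ᵥ v = χ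

/-- Worst-case distinguishability: infimum of trace distances of pure states
taken from the ranges of `ρ` and `ρ'`. -/
noncomputable def wcd {m : Type*} [Fintype m] [DecidableEq m] (ρ ρ' : Matrix m m ℂ) : ℝ :=
  sInf { d : ℝ | ∃ χ χ' : m → ℂ, inRange ρ χ ∧ inRange ρ' χ' ∧
    star χ ⬝ᵥ χ = 1 ∧ star χ' ⬝ᵥ χ' = 1 ∧ d = trNorm (pureProj χ - pureProj χ') }

/-!
For pure states `Φ, Ψ` with overlap `t = tr(ΦΨ) ∈ [0, 1]`, the rank-one identities `ΦΨΦ = tΦ` and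
`ΨΦΨ = tΨ` give `A³ = (a - b)A² + ab(1 - t)A` for `A = aΦ - bΨ`. Hence the nonzero eigenvalues
of the Hermitian matrix `A` are the two roots of `μ² - (a - b)μ - ab(1 - t)`, which have opposite
signs, and `‖A‖_tr = ½ √((a - b)² + 4ab(1 - t))`. The theorem thus becomes an inequality between
square roots `√P, √Q` in `qᵢ, qⱼ, t`; after squaring it reduces to `R ≤ √(PQ)` for an explicit
polynomial `R` with `PQ - R² = 4t(1 - t)(qᵢ + qⱼ - 1)²(qᵢ - qⱼ)² ≥ 0`.
-/

lemma exists_eq_piSingle_of_idempotent_of_sum_eq_one {ι : Type*} [Fintype ι] [DecidableEq ι]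
    {f : ι → ℝ} (hf : ∀ i, f i * f i = f i) (hsum : ∑ i, f i = 1) : ∃ k, f = Pi.single k 1 := by
  have hf01 : ∀ i, f i = 0 ∨ f i = 1 := fun i => by
    rcases mul_eq_zero.mp (show f i * (f i - 1) = 0 by linear_combination hf i) with h | h
    exacts [.inl h, .inr (sub_eq_zero.mp h)]
  have hnonneg : ∀ i, 0 ≤ f i := fun i => by rcases hf01 i with h | h <;> simp [h]
  obtain ⟨k, -, hk⟩ := Finset.exists_ne_zero_of_sum_ne_zero (hsum.trans_ne one_ne_zero)
  refine ⟨k, funext fun i => ?_⟩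
  rcases eq_or_ne i k with rfl | hik
  · simpa using (hf01 i).resolve_left hk
  · have hpair : f i + f k ≤ 1 := by
      rw [← hsum, ← Finset.sum_pair hik]
      exact Finset.sum_le_sum_of_subset_of_nonneg (Finset.subset_univ _)
        fun j _ _ => hnonneg j
    rw [Pi.single_eq_of_ne hik]
    rcases hf01 i with h | h
    · exact h
    · rcases hf01 k with h' | h' <;> [exact absurd h' hk; linarith]

lemma abs_mul_sqrt_eq_of_cube_eq {μ c e : ℝ} (he : 0 ≤ e) (hμ : μ ^ 3 = c * μ ^ 2 + e * μ) :
    |μ| * √(c ^ 2 + 4 * e) = 2 * μ ^ 2 - c * μ := by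
  rcases eq_or_ne μ 0 with rfl | hμ0
  · simp
  have hquad : μ ^ 2 = c * μ + e := by
    apply mul_left_cancel₀ hμ0
    linear_combination hμ
  have hdisc : c ^ 2 + 4 * e = (2 * μ - c) ^ 2 := by linear_combination -4 * hquad
  have hsign : μ * (2 * μ - c) = μ ^ 2 + e := by linear_combination hquad
  rw [hdisc, Real.sqrt_sq_eq_abs, ← abs_mul, hsign, abs_of_nonneg (by positivity)]
  linear_combination -hquad

lemma sum_abs_eq_sqrt_of_cube_eq {ι : Type*} [Fintype ι] {μ : ι → ℝ} {c e : ℝ} (he : 0 ≤ e)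
    (hμ : ∀ i, μ i ^ 3 = c * μ i ^ 2 + e * μ i) (h1 : ∑ i, μ i = c)
    (h2 : ∑ i, μ i ^ 2 = c ^ 2 + 2 * e) :
    ∑ i, |μ i| = √(c ^ 2 + 4 * e) := by
  set D := √(c ^ 2 + 4 * e)
  have hD : D ^ 2 = c ^ 2 + 4 * e := Real.sq_sqrt (by positivity)
  have hmul : (∑ i, |μ i|) * D = D * D := by
    rw [Finset.sum_mul, Finset.sum_congr rfl fun i _ => abs_mul_sqrt_eq_of_cube_eq he (hμ i),
      Finset.sum_sub_distrib, ← Finset.mul_sum, ← Finset.mul_sum, h1, h2]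
    linear_combination -hD
  rcases eq_or_ne D 0 with hD0 | hD0
  · have hc : c = 0 := by nlinarith
    refine hD0 ▸ Finset.sum_eq_zero fun i _ => ?_
    have hi : |μ i| * D = 2 * μ i ^ 2 - c * μ i := abs_mul_sqrt_eq_of_cube_eq he (hμ i)
    rw [hD0, hc] at hi
    simp [show μ i = 0 by nlinarith]
  · exact mul_right_cancel₀ hD0 hmul

namespace Matrix.IsHermitian

variable {𝕜 n : Type*} [RCLike 𝕜] [Fintype n] [DecidableEq n] {A : Matrix n n 𝕜}

lemma trace_cfc (hA : A.IsHermitian) (f : ℝ → ℝ) :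
    (cfc f A).trace = ∑ i, (f (hA.eigenvalues i) : 𝕜) := by
  rw [hA.cfc_eq, IsHermitian.cfc, Unitary.conjStarAlgAut_apply, trace_mul_cycle,
    Unitary.coe_star_mul_self, one_mul, trace_diagonal]
  rfl

lemma apply_eigenvalues_eq_zero_of_cfc_eq_zero (hA : A.IsHermitian) {f : ℝ → ℝ}
    (hf : cfc f A = 0) (i : n) : f (hA.eigenvalues i) = 0 :=
  (eqOn_of_cfc_eq_cfc (hf.trans (cfc_zero ℝ A).symm)
    (hf := A.finite_real_spectrum.continuousOn f)) (hA.eigenvalues_mem_spectrum_real i)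

lemma sum_abs_eigenvalues_eq_sqrt_of_cube_eq (hA : A.IsHermitian) {c e : ℝ} (he : 0 ≤ e)
    (h3 : A ^ 3 = c • A ^ 2 + e • A) (h1 : A.trace = c)
    (h2 : (A ^ 2).trace = (c ^ 2 + 2 * e : ℝ)) :
    ∑ i, |hA.eigenvalues i| = √(c ^ 2 + 4 * e) := by
  refine sum_abs_eq_sqrt_of_cube_eq he (fun i => ?_) ?_ ?_
  · have hcfc : cfc (fun x : ℝ => x ^ 3 - (c * x ^ 2 + e * x)) A = 0 := by
      rw [cfc_sub .., cfc_add .., cfc_const_mul .., cfc_const_mul .., cfc_pow_id .., cfc_pow_id ..,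
        cfc_id' .., ← h3, sub_self]
    exact sub_eq_zero.mp (hA.apply_eigenvalues_eq_zero_of_cfc_eq_zero hcfc i)
  · rw [← cfc_id' ℝ A, hA.trace_cfc] at h1
    exact_mod_cast h1
  · rw [← cfc_pow_id (R := ℝ) A 2, hA.trace_cfc] at h2
    exact_mod_cast h2

end Matrix.IsHermitian

lemma trNorm_eq_re_trace_cfc_sqrt {n : Type*} [Fintype n] [DecidableEq n] (A : Matrix n n ℂ) :
    trNorm A = (cfc Real.sqrt (Aᴴ * A)).trace.re / 2 := by
  rw [(posSemidef_conjTranspose_mul_self A).isHermitian.cfc_eq, trNorm, IsHermitian.cfc,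
    Unitary.conjStarAlgAut_apply, one_div, inv_mul_eq_div]
  rfl

lemma trNorm_of_isHermitian {n : Type*} [Fintype n] [DecidableEq n] {A : Matrix n n ℂ}
    (hA : A.IsHermitian) : trNorm A = (∑ i, |hA.eigenvalues i|) / 2 := by
  have habs : cfc Real.sqrt (Aᴴ * A) = cfc (fun x : ℝ => |x|) A := by
    rw [hA.eq, ← sq, ← cfc_comp_pow Real.sqrt 2 A]
    simp only [Real.sqrt_sq_eq_abs]
  rw [trNorm_eq_re_trace_cfc_sqrt, habs, hA.trace_cfc]
  simp [Complex.re_sum]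

lemma smul_sub_smul_pow_three {R A : Type*} [CommRing R] [Ring A] [Algebra R A] {M N : A}
    (hM : M * M = M) (hN : N * N = N) {τ : R} (hMNM : M * N * M = τ • M) (hNMN : N * M * N = τ • N)
    (a b : R) :
    (a • M - b • N) ^ 3 = (a - b) • (a • M - b • N) ^ 2 + (a * b * (1 - τ)) • (a • M - b • N) := by
  rw [mul_assoc] at hMNM hNMN
  simp only [pow_succ, pow_zero, one_mul, sub_mul, mul_sub, smul_mul_smul, mul_assoc, hM, hN,
    hMNM, hNMN, smul_smul, smul_sub, sub_smul]
  module

lemma Matrix.vecMulVec_mul_mul_vecMulVec {R n : Type*} [CommSemiring R] [Fintype n]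
    (u v : n → R) (X : Matrix n n R) :
    vecMulVec u v * X * vecMulVec u v = (vecMulVec u v * X).trace • vecMulVec u v := by
  rw [vecMulVec_mul, vecMulVec_mul_vecMulVec, vecMulVec_smul, trace_vecMulVec, dotProduct_comm]

namespace IsPureState

variable {n : Type*} [Fintype n] {Φ Ψ : Matrix n n ℂ}

lemma trace_mul_nonneg (hΦ : IsPureState Φ) (hΨ : IsPureState Ψ) : 0 ≤ (Φ * Ψ).trace := by
  have h := (posSemidef_conjTranspose_mul_self (Ψ * Φ)).trace_nonneg
  rwa [conjTranspose_mul, hΦ.1.1.isHermitian.eq, hΨ.1.1.isHermitian.eq, Matrix.mul_assoc,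
    ← Matrix.mul_assoc Ψ, hΨ.2, ← Matrix.mul_assoc, trace_mul_comm, ← Matrix.mul_assoc, hΦ.2] at h

lemma trace_mul_le_one (hΦ : IsPureState Φ) (hΨ : IsPureState Ψ) : (Φ * Ψ).trace ≤ 1 := by
  have h := (posSemidef_conjTranspose_mul_self (Φ - Ψ)).trace_nonneg
  have hexp : ((Φ - Ψ)ᴴ * (Φ - Ψ)).trace = 2 - 2 * (Φ * Ψ).trace := by
    rw [conjTranspose_sub, hΦ.1.1.isHermitian.eq, hΨ.1.1.isHermitian.eq, sub_mul, mul_sub,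
      mul_sub, hΦ.2, hΨ.2, trace_sub, trace_sub, trace_sub, hΦ.1.2, hΨ.1.2, trace_mul_comm Ψ Φ]
    ring
  rw [hexp, Complex.le_def] at h
  rw [Complex.le_def]
  simp only [Complex.sub_re, Complex.mul_re, Complex.sub_im, Complex.mul_im] at h
  norm_num at h ⊢
  constructor <;> linarith

lemma trace_mul_eq_ofReal_re (hΦ : IsPureState Φ) (hΨ : IsPureState Ψ) :
    (Φ * Ψ).trace = ((Φ * Ψ).trace.re : ℂ) :=
  Complex.eq_re_of_ofReal_le (r := 0) (by rw [Complex.ofReal_zero]; exact hΦ.trace_mul_nonneg hΨ)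

lemma re_trace_mul_mem_Icc (hΦ : IsPureState Φ) (hΨ : IsPureState Ψ) :
    (Φ * Ψ).trace.re ∈ Set.Icc (0 : ℝ) 1 :=
  ⟨(Complex.le_def.mp (hΦ.trace_mul_nonneg hΨ)).1, (Complex.le_def.mp (hΦ.trace_mul_le_one hΨ)).1⟩

variable [DecidableEq n]

lemma exists_eq_vecMulVec (hΦ : IsPureState Φ) : ∃ u v : n → ℂ, Φ = vecMulVec u v := by
  obtain ⟨⟨hpsd, htr⟩, hidem⟩ := hΦ
  have hH := hpsd.isHermitian
  have hidem' : ∀ i, hH.eigenvalues i * hH.eigenvalues i = hH.eigenvalues i := fun i => by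
    have hcfc : cfc (fun x : ℝ => x * x - x) Φ = 0 := by
      rw [cfc_sub .., cfc_mul .., cfc_id' .., hidem, sub_self]
    exact sub_eq_zero.mp (hH.apply_eigenvalues_eq_zero_of_cfc_eq_zero hcfc i)
  have hsum : ∑ i, hH.eigenvalues i = 1 := by
    rw [hH.trace_eq_sum_eigenvalues, ← RCLike.ofReal_sum] at htr
    exact Complex.ofReal_eq_one.mp htr
  obtain ⟨k, hk⟩ := exists_eq_piSingle_of_idempotent_of_sum_eq_one hidem' hsum
  have hdiag : diagonal (RCLike.ofReal ∘ hH.eigenvalues) = single k k (1 : ℂ) := by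
    rw [hk, ← diagonal_single]
    congr 1
    ext i
    by_cases hik : i = k <;> simp [hik]
  rw [hH.spectral_theorem, Unitary.conjStarAlgAut_apply, hdiag,
    single_eq_single_vecMulVec_single, mul_vecMulVec, vecMulVec_mul]
  exact ⟨_, _, rfl⟩

lemma mul_mul_self_eq_trace_mul_smul (hΦ : IsPureState Φ) (X : Matrix n n ℂ) :
    Φ * X * Φ = (Φ * X).trace • Φ := by
  obtain ⟨u, v, rfl⟩ := hΦ.exists_eq_vecMulVec
  exact vecMulVec_mul_mul_vecMulVec u v X

lemma trNorm_smul_sub_smul (hΦ : IsPureState Φ) (hΨ : IsPureState Ψ) {a b : ℝ} (ha : 0 ≤ a)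
    (hb : 0 ≤ b) :
    trNorm ((a : ℂ) • Φ - (b : ℂ) • Ψ) =
      √((a - b) ^ 2 + 4 * (a * b * (1 - (Φ * Ψ).trace.re))) / 2 := by
  set t := (Φ * Ψ).trace.re
  have ht : (Φ * Ψ).trace = t := hΦ.trace_mul_eq_ofReal_re hΨ
  have hΦΨΦ : Φ * Ψ * Φ = t • Φ := by
    rw [hΦ.mul_mul_self_eq_trace_mul_smul, ht, Complex.coe_smul]
  have hΨΦΨ : Ψ * Φ * Ψ = t • Ψ := by
    rw [hΨ.mul_mul_self_eq_trace_mul_smul, trace_mul_comm, ht, Complex.coe_smul]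
  have hA : (a • Φ - b • Ψ).IsHermitian :=
    (hΦ.1.1.isHermitian.smul (IsSelfAdjoint.all a)).sub
      (hΨ.1.1.isHermitian.smul (IsSelfAdjoint.all b))
  have h1 : (a • Φ - b • Ψ).trace = (a - b : ℝ) := by
    simp [trace_sub, trace_smul, hΦ.1.2, hΨ.1.2]
  have h2 : ((a • Φ - b • Ψ) ^ 2).trace = ((a - b) ^ 2 + 2 * (a * b * (1 - t)) : ℝ) := by
    rw [sq, sub_mul, mul_sub, mul_sub, smul_mul_smul, smul_mul_smul, smul_mul_smul, smul_mul_smul,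
      hΦ.2, hΨ.2]
    simp only [trace_sub, trace_smul, hΦ.1.2, hΨ.1.2, trace_mul_comm Ψ Φ, ht, Complex.real_smul]
    push_cast
    ring
  have he : 0 ≤ a * b * (1 - t) :=
    mul_nonneg (mul_nonneg ha hb) (sub_nonneg.mpr (hΦ.re_trace_mul_mem_Icc hΨ).2)
  simp only [Complex.coe_smul]
  rw [trNorm_of_isHermitian hA, hA.sum_abs_eigenvalues_eq_sqrt_of_cube_eq he
    (smul_sub_smul_pow_three hΦ.2 hΨ.2 hΦΨΦ hΨΦΨ a b) h1 h2]

end IsPureState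

lemma one_sub_add_sq_mul_le_sq_sqrt_add_sqrt {x y t : ℝ} (hx : x ∈ Set.Icc (0 : ℝ) 1)
    (hy : y ∈ Set.Icc (0 : ℝ) 1) (ht : t ∈ Set.Icc (0 : ℝ) 1) :
    (1 - t) + (x + y - 1) ^ 2 * t ≤
      (√((x - (1 - y)) ^ 2 + 4 * (x * (1 - y) * (1 - t))) / 2
        + √((1 - x - y) ^ 2 + 4 * ((1 - x) * y * (1 - t))) / 2) ^ 2 := by
  obtain ⟨hx0, hx1⟩ := hx
  obtain ⟨hy0, hy1⟩ := hy
  obtain ⟨ht0, ht1⟩ := ht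
  set P := (x - (1 - y)) ^ 2 + 4 * (x * (1 - y) * (1 - t))
  set Q := (1 - x - y) ^ 2 + 4 * ((1 - x) * y * (1 - t))
  have hP : 0 ≤ P := by positivity
  have hQ : 0 ≤ Q := by positivity
  set R := (x + y - 1) ^ 2 + 2 * (1 - t) * (x * (1 - x) + y * (1 - y))
  have hRPQ : R ^ 2 ≤ P * Q := by
    have hdiff : P * Q - R ^ 2 = 4 * (1 - t) * t * ((x + y - 1) * (x - y)) ^ 2 := by ring
    nlinarith [mul_nonneg (mul_nonneg (sub_nonneg.mpr ht1) ht0) (sq_nonneg ((x + y - 1) * (x - y)))]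
  have hR : R ≤ √P * √Q := by
    rw [← Real.sqrt_mul hP]
    exact (le_abs_self R).trans (Real.abs_le_sqrt hRPQ)
  nlinarith [Real.sq_sqrt hP, Real.sq_sqrt hQ]

/-- for pure states `Φᵢ, Φⱼ` and `qᵢ, qⱼ ∈ [0,1]`,
`(‖qᵢΦᵢ − (1−qⱼ)Φⱼ‖ + ‖(1−qᵢ)Φᵢ − qⱼΦⱼ‖)² ≥ ‖Φᵢ − Φⱼ‖² + (qᵢ+qⱼ−1)² tr(ΦᵢΦⱼ)`. -/
theorem discrimination_trace_norm_inequality {n : Type*} [Fintype n] [DecidableEq n]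
    (Φi Φj : Matrix n n ℂ) (hi : IsPureState Φi) (hj : IsPureState Φj)
    (qi qj : ℝ) (hqi : qi ∈ Set.Icc (0 : ℝ) 1) (hqj : qj ∈ Set.Icc (0 : ℝ) 1) :
    trNorm (Φi - Φj) ^ 2 + (qi + qj - 1) ^ 2 * ((Φi * Φj).trace).re
      ≤ (trNorm ((qi : ℂ) • Φi - ((1 - qj : ℝ) : ℂ) • Φj)
          + trNorm (((1 - qi : ℝ) : ℂ) • Φi - (qj : ℂ) • Φj)) ^ 2 := by
  have ht := hi.re_trace_mul_mem_Icc hj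
  have hdist : trNorm (Φi - Φj) ^ 2 = 1 - (Φi * Φj).trace.re := by
    have h := hi.trNorm_smul_sub_smul hj zero_le_one zero_le_one
    rw [Complex.ofReal_one, one_smul, one_smul] at h
    rw [h, div_pow, Real.sq_sqrt (by nlinarith [ht.2])]
    ring
  rw [hdist, hi.trNorm_smul_sub_smul hj hqi.1 (sub_nonneg.mpr hqj.2),
    hi.trNorm_smul_sub_smul hj (sub_nonneg.mpr hqi.2) hqj.1]
  exact one_sub_add_sq_mul_le_sq_sqrt_add_sqrt hqi hqj ht
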